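/- arXiv:2601.16003 — 2 statements merged into one kernel-verified Lean document; each statement's English description precedes it below -/
import Mathlib

section
/- Given u̲ < 0 < ū and states x₀, x_f ∈ ℝ², if x₀₁ = x_f1 = 0 and x_f2 > x₀₂, then there is exactly one pair (t₁, t₂) with t₁, t₂ > 0 such that x₀₁ + ū t₁ + u̲ t₂ = x_f1 and x₀₂ + x₀₁ t₁ + ū t₁²/2 + (x₀₁ + ū t₁) t₂ + u̲ t₂²/2 = x_f2, namely t₂ = -ū t₁/u̲ and t₁ = sqrt(2(x_f2 - x₀₂)u̲/(ū(u̲ - ū))). -/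
theorem one_switch_unique (ul ub x02 xf2 : ℝ)
    (hul : ul < 0) (hub : 0 < ub) (h : x02 < xf2) :
    (∃! p : ℝ × ℝ, 0 < p.1 ∧ 0 < p.2 ∧
        ub * p.1 + ul * p.2 = 0 ∧
        x02 + ub * p.1 ^ 2 / 2 + ub * p.1 * p.2 + ul * p.2 ^ 2 / 2 = xf2) ∧
    (∀ p : ℝ × ℝ,
        (0 < p.1 ∧ 0 < p.2 ∧
          ub * p.1 + ul * p.2 = 0 ∧
          x02 + ub * p.1 ^ 2 / 2 + ub * p.1 * p.2 + ul * p.2 ^ 2 / 2 = xf2) →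
        p.1 = Real.sqrt (2 * (xf2 - x02) * ul / (ub * (ul - ub))) ∧
        p.2 = -ub * p.1 / ul) := by
  have hulne : ul ≠ 0 := ne_of_lt hul
  have hubne : ub ≠ 0 := ne_of_gt hub
  set A := 2 * (xf2 - x02) * ul / (ub * (ul - ub)) with hAdef
  have hA : 0 < A := by
    apply div_pos_of_neg_of_neg
    · nlinarith
    · nlinarith
  set t1 := Real.sqrt A with ht1def
  have ht1pos : 0 < t1 := Real.sqrt_pos.mpr hA
  have ht1sq : t1 ^ 2 = A := Real.sq_sqrt hA.le
  have hne : ub * (ul - ub) ≠ 0 := mul_ne_zero hubne (by nlinarith)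
  have ht1sq' : ub * t1 ^ 2 * (ul - ub) = 2 * (xf2 - x02) * ul := by
    rw [ht1sq, hAdef]
    field_simp
    exact mul_div_cancel_right₀ _ (sub_ne_zero.mpr (ne_of_lt (by linarith : ul < ub)))
  have key : ∀ p : ℝ × ℝ, (0 < p.1 ∧ 0 < p.2 ∧ ub * p.1 + ul * p.2 = 0 ∧
      x02 + ub * p.1 ^ 2 / 2 + ub * p.1 * p.2 + ul * p.2 ^ 2 / 2 = xf2) →
      p.1 = t1 ∧ p.2 = -ub * p.1 / ul := by
    rintro ⟨a, b⟩ ⟨ha, hb, h3, h4⟩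
    simp only at ha hb h3 h4 ⊢
    have hb' : b = -ub * a / ul := by field_simp; linarith
    subst hb'
    have ha2' : a ^ 2 * (ub * (ul - ub)) = 2 * (xf2 - x02) * ul := by
      have h5 : (a ^ 2 * (ub * (ul - ub)) - 2 * (xf2 - x02) * ul) * (2 * ul ^ 2) = 0 := by
        field_simp at h4
        linear_combination (2 * ul ^ 2) * h4
      have h6 : (2 : ℝ) * ul ^ 2 ≠ 0 := by positivity
      have := (mul_eq_zero.mp h5).resolve_right h6
      linarith [this]
    have ha2 : a ^ 2 = A := by
      rw [hAdef, eq_div_iff hne]; exact ha2'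
    refine ⟨?_, rfl⟩
    rw [ht1def, ← ha2, Real.sqrt_sq ha.le]
  constructor
  · refine ⟨(t1, -ub * t1 / ul), ⟨ht1pos, ?_, ?_, ?_⟩, ?_⟩
    · apply div_pos_of_neg_of_neg _ hul
      nlinarith
    · field_simp
      ring
    · field_simp
      nlinarith [ht1sq']
    · intro p hp
      obtain ⟨h1, h2⟩ := key p hp
      ext <;> simp [h1, h2]
  · intro p hp
    exact key p hp
end

section
/- Number of one-switch bang-bang controls for the double integrator: let u̲ < 0 < ū and let x₀, x_f ∈ ℝ² with x₀₁ ≥ 0, x_f1 > 0 and x₀₂ - x₀₁²/(2u̲) ≥ x_f2 + x_f1²/(2ū). Then there exist t₁, t₂ ≥ 0 such that the control u̲-for-time-t₁-then-ū-for-time-t₂ steers x₀ to x_f (i.e., x₀₁ + u̲t₁ + ūt₂ = x_f1 and x₀₂ + x₀₁t₁ + u̲t₁²/2 + (x₀₁+u̲t₁)t₂ + ūt₂²/2 = x_f2). -/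
theorem ul_then_ub_connection_exists (ul ub x01 x02 xf1 xf2 : ℝ)
    (hul : ul < 0) (hub : 0 < ub)
    (hx01 : 0 ≤ x01) (hxf1 : 0 < xf1)
    (h : x02 - x01 ^ 2 / (2 * ul) ≥ xf2 + xf1 ^ 2 / (2 * ub)) :
    ∃ t₁ t₂ : ℝ, 0 ≤ t₁ ∧ 0 ≤ t₂ ∧
      x01 + ul * t₁ + ub * t₂ = xf1 ∧
      x02 + x01 * t₁ + ul * t₁ ^ 2 / 2 + (x01 + ul * t₁) * t₂ + ub * t₂ ^ 2 / 2 = xf2 := by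
  have hul' : ul ≠ 0 := ne_of_lt hul
  have hub' : ub ≠ 0 := ne_of_gt hub
  have hulub : ul - ub < 0 := by linarith
  have hAB : xf2 - xf1 ^ 2 / (2 * ub) ≤ x02 - x01 ^ 2 / (2 * ul) := by
    have h1 : 0 ≤ xf1 ^ 2 / (2 * ub) := by positivity
    linarith
  set D := 2 * ub * ul * ((x02 - x01 ^ 2 / (2 * ul)) - (xf2 - xf1 ^ 2 / (2 * ub))) / (ul - ub)
    with hD
  have hDnonneg : 0 ≤ D := by
    rw [hD]
    apply div_nonneg_iff.mpr
    right
    constructor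
    · have hd : 0 ≤ x02 - x01 ^ 2 / (2 * ul) - (xf2 - xf1 ^ 2 / (2 * ub)) := by linarith
      nlinarith [mul_nonneg hub.le hd, mul_nonpos_of_nonpos_of_nonneg hul.le (mul_nonneg hub.le hd)]
    · linarith
  obtain ⟨v, hv2, hvle⟩ : ∃ v : ℝ, v ^ 2 = D ∧ v ≤ 0 :=
    ⟨-Real.sqrt D, by rw [neg_sq, Real.sq_sqrt hDnonneg], by simp [Real.sqrt_nonneg]⟩
  have hkey : v ^ 2 * (ul - ub) =
      2 * ub * ul * ((x02 - x01 ^ 2 / (2 * ul)) - (xf2 - xf1 ^ 2 / (2 * ub))) := by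
    rw [hv2, hD, div_mul_cancel₀ _ (ne_of_lt hulub)]
  refine ⟨(v - x01) / ul, (xf1 - v) / ub, ?_, ?_, ?_, ?_⟩
  · apply div_nonneg_iff.mpr; right; constructor <;> linarith
  · apply div_nonneg <;> linarith
  · field_simp; ring
  · field_simp at hkey ⊢
    linear_combination (-1 : ℝ) * hkey
end
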